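/- arXiv:1710.07127 — 3 statements merged into one kernel-verified Lean document; each statement's English description precedes it below -/
import Mathlib

section
/- For every nonnegative integer n and every complex number z, 2^n · B_n(z + 1/4) = ∑_{k=0}^{n} 2^{2k-n} · C(n,k) · B_k(z) = ∑_{k=0}^{n} C(n,k) · E_{n-k}(1/2) · B_k(2z) = ∑_{k=0}^{n} C(n,k) · B_{n-k}(1/2) · E_k(2z), where C(n,k) denotes the binomial coefficient. -/
/-! The four sums are `n!` times the `n`-th coefficients of four exponential generating series in
`ℂ⟦X⟧`. Writing `e = exp` and `e_c = rescale c e`, the Bernoulli series satisfies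
`B(u) * (e - 1) = X * e_u`, and the Euler series `G(v) * (e + 1) = 2 * e_v`: the explicit
formula reads `E_n(v) = ∑_k (-1/2)^k Δ^k[x^n](v)`, a truncated inverse of `1 + Δ/2` applied to
`x^n`, so that `E_n(v) + E_n(v + 1) = 2 v^n`. Since `(e - 1)(e + 1) = e_2 - 1`, each of the four
series, multiplied by `(e - 1)(e + 1)`, gives `2 X e_{2z + 1/2}`, and `ℂ⟦X⟧` is a domain. -/

open Finset

/-- The Bernoulli polynomial `B_n` evaluated at a complex number `z`,
with generating function `t·e^{zt}/(e^t−1) = ∑_{n≥0} B_n(z)·t^n/n!`. -/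
noncomputable def bernoulliPoly (n : ℕ) (z : ℂ) : ℂ :=
  Polynomial.aeval z (Polynomial.bernoulli n)

/-- The Euler polynomial `E_n` evaluated at a complex number `z`,
with generating function `2·e^{zt}/(e^t+1) = ∑_{n≥0} E_n(z)·t^n/n!`,
given by the explicit formula `E_n(z) = ∑_{k=0}^n 2^{-k} ∑_{j=0}^k (-1)^j C(k,j)(z+j)^n`. -/
noncomputable def eulerPoly (n : ℕ) (z : ℂ) : ℂ :=
  ∑ k ∈ range (n + 1), (1 / 2 ^ k : ℂ) *
    ∑ j ∈ range (k + 1), (-1) ^ j * (k.choose j : ℂ) * (z + j) ^ n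

open scoped Nat fwdDiff
open PowerSeries

theorem fwdDiff_iter_apply_add_self {M G : Type*} [AddCommMonoid M] [AddCommGroup G] (h : M)
    (f : M → G) (k : ℕ) (y : M) :
    Δ_[h] ^[k] f (y + h) = Δ_[h] ^[k] f y + Δ_[h] ^[k + 1] f y := by
  rw [Function.iterate_succ_apply', fwdDiff]
  abel

section FwdDiff

variable {R : Type*} [CommRing R]

theorem sum_neg_one_pow_mul_choose_mul_shift_eq_fwdDiff_iter (f : R → R) (k : ℕ) (w : R) :
    ∑ j ∈ range (k + 1), (-1) ^ j * (k.choose j : R) * f (w + j)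
      = (-1) ^ k * Δ_[1] ^[k] f w := by
  rw [fwdDiff_iter_eq_sum_shift, mul_sum]
  refine sum_congr rfl fun j hj => ?_
  obtain ⟨i, rfl⟩ := Nat.exists_eq_add_of_le (Nat.lt_succ_iff.mp (mem_range.mp hj))
  simp only [Nat.add_sub_cancel_left, zsmul_eq_mul, nsmul_one, pow_add]
  push_cast
  have hsq : ((-1 : R) ^ i) * (-1) ^ i = 1 := by rw [← mul_pow]; simp
  linear_combination -(-1 : R) ^ j * (j + i).choose j * f (w + j) * hsq

theorem fwdDiff_iter_pow_add_one (k n : ℕ) (w : R) :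
    Δ_[1] ^[k] (· ^ n) (w + 1)
      = ∑ m ∈ range (n + 1), (n.choose m : R) * Δ_[1] ^[k] (· ^ m) w := by
  have h : (fun r : R => (r + 1) ^ n)
      = ∑ m ∈ range (n + 1), (n.choose m : R) • fun r : R => r ^ m := by
    ext r
    simp [add_pow, mul_comm]
  rw [← fwdDiff_iter_comp_add, h, fwdDiff_iter_finsetSum, Finset.sum_apply]
  simp only [fwdDiff_iter_const_smul, Pi.smul_apply, smul_eq_mul]

end FwdDiff

section EGF

variable {K : Type*} [Field K]

noncomputable def egf (a : ℕ → K) : K⟦X⟧ := mk fun n => a n / n !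

@[simp]
theorem coeff_egf (a : ℕ → K) (n : ℕ) : coeff n (egf a) = a n / n ! := coeff_mk _ _

theorem egf_injective [CharZero K] : Function.Injective (egf : (ℕ → K) → K⟦X⟧) :=
  fun a b h => funext fun n => by simpa [Nat.factorial_ne_zero] using congrArg (coeff n) h

theorem egf_mul_egf [CharZero K] (a b : ℕ → K) :
    egf a * egf b = egf fun n => ∑ k ∈ range (n + 1), (n.choose k : K) * a k * b (n - k) := by
  ext n
  rw [coeff_mul, Nat.sum_antidiagonal_eq_sum_range_succ_mk, coeff_egf, sum_div]
  refine sum_congr rfl fun k hk => ?_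
  have hn : (n ! : K) ≠ 0 := Nat.cast_ne_zero.mpr n.factorial_ne_zero
  rw [coeff_egf, coeff_egf, Nat.cast_choose K (Nat.lt_succ_iff.mp (mem_range.mp hk))]
  field_simp

theorem rescale_egf (c : K) (a : ℕ → K) : rescale c (egf a) = egf fun n => c ^ n * a n := by
  simp only [egf, rescale_mk, mul_div_assoc]

theorem rescale_exp_eq_egf [CharZero K] (c : K) : rescale c (exp K) = egf (c ^ ·) := by
  ext n
  simp [coeff_exp, div_eq_mul_inv]

end EGF

theorem eulerPoly_eq_sum_fwdDiff {n N : ℕ} (h : n ≤ N) (w : ℂ) :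
    eulerPoly n w = ∑ k ∈ range (N + 1), (-1 / 2 : ℂ) ^ k * Δ_[1] ^[k] (· ^ n) w := by
  have hterm (k : ℕ) :
      (1 / 2 ^ k : ℂ) * ∑ j ∈ range (k + 1), (-1) ^ j * (k.choose j : ℂ) * (w + j) ^ n
        = (-1 / 2 : ℂ) ^ k * Δ_[1] ^[k] (· ^ n) w := by
    rw [show _ = _ from sum_neg_one_pow_mul_choose_mul_shift_eq_fwdDiff_iter (· ^ n) k w,
      neg_div, neg_pow (1 / 2 : ℂ), div_pow]
    ring
  simp only [eulerPoly, hterm]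
  refine sum_subset (range_subset_range.mpr (by omega)) fun k hk hk' => ?_
  rw [fwdDiff_iter_pow_eq_zero_of_lt (by simp only [mem_range] at hk hk'; omega), Pi.zero_apply,
    mul_zero]

theorem eulerPoly_add_one (n : ℕ) (w : ℂ) :
    eulerPoly n (w + 1) = ∑ m ∈ range (n + 1), (n.choose m : ℂ) * eulerPoly m w := by
  rw [eulerPoly_eq_sum_fwdDiff le_rfl]
  simp_rw [fwdDiff_iter_pow_add_one, mul_sum]
  rw [sum_comm]
  refine sum_congr rfl fun m hm => ?_
  rw [eulerPoly_eq_sum_fwdDiff (Nat.lt_succ_iff.mp (mem_range.mp hm)), mul_sum]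
  exact sum_congr rfl fun k _ => by ring

theorem eulerPoly_add_eulerPoly_add_one (n : ℕ) (w : ℂ) :
    eulerPoly n w + eulerPoly n (w + 1) = 2 * w ^ n := by
  set a : ℕ → ℂ := fun k => (-1 / 2 : ℂ) ^ k * Δ_[1] ^[k] (· ^ n) w with ha
  have hstep (k : ℕ) : (-1 / 2 : ℂ) ^ k * Δ_[1] ^[k] (· ^ n) w
      + (-1 / 2 : ℂ) ^ k * Δ_[1] ^[k] (· ^ n) (w + 1) = 2 * (a k - a (k + 1)) := by
    rw [fwdDiff_iter_apply_add_self, ha]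
    ring
  rw [eulerPoly_eq_sum_fwdDiff le_rfl, eulerPoly_eq_sum_fwdDiff le_rfl, ← sum_add_distrib]
  simp only [hstep, ← mul_sum, sum_range_sub', ha, fwdDiff_iter_pow_eq_zero_of_lt n.lt_succ_self]
  simp

theorem egf_bernoulliPoly_mul_exp_sub_one (w : ℂ) :
    egf (bernoulliPoly · w) * (exp ℂ - 1) = X * rescale w (exp ℂ) := by
  rw [← Polynomial.bernoulli_generating_function w]
  congr 1
  ext n
  simp [bernoulliPoly, Rat.smul_def, div_eq_inv_mul]

theorem egf_eulerPoly_mul_exp_add_one (w : ℂ) :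
    egf (eulerPoly · w) * (exp ℂ + 1) = 2 * rescale w (exp ℂ) := by
  have hexp : exp ℂ = egf fun _ => 1 := by simpa using rescale_exp_eq_egf (1 : ℂ)
  rw [mul_add, mul_one, hexp, egf_mul_egf, rescale_egf]
  simp_rw [mul_one, ← eulerPoly_add_one]
  ext n
  rw [← map_ofNat C 2, coeff_C_mul, map_add, coeff_egf, coeff_egf, coeff_egf, ← add_div,
    add_comm, eulerPoly_add_eulerPoly_add_one, mul_div_assoc]

theorem exp_sub_one_mul_exp_add_one (A : Type*) [CommRing A] [Algebra ℚ A] :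
    (exp A - 1) * (exp A + 1) = rescale 2 (exp A - 1) := by
  have h := exp_mul_exp_eq_exp_add (1 : A) 1
  rw [rescale_one, RingHom.id_apply, one_add_one_eq_two] at h
  rw [map_sub, map_one, ← h]
  ring

theorem exp_sub_one_ne_zero (K : Type*) [Field K] [CharZero K] : exp K - 1 ≠ 0 := fun h => by
  simpa [coeff_exp] using congrArg (coeff 1) h

theorem exp_add_one_ne_zero (K : Type*) [Field K] [CharZero K] : exp K + 1 ≠ 0 := fun h => by
  simpa [coeff_exp, one_add_one_eq_two] using congrArg (coeff 0) h

theorem egf_bernoulliPoly_add (u c : ℂ) :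
    egf (bernoulliPoly · (u + c)) = egf (bernoulliPoly · u) * rescale c (exp ℂ) := by
  refine mul_right_cancel₀ (exp_sub_one_ne_zero ℂ) ?_
  rw [mul_right_comm, egf_bernoulliPoly_mul_exp_sub_one, egf_bernoulliPoly_mul_exp_sub_one,
    mul_assoc, exp_mul_exp_eq_exp_add]

theorem rescale_two_egf_bernoulliPoly_mul (w : ℂ) :
    rescale 2 (egf (bernoulliPoly · w)) * ((exp ℂ - 1) * (exp ℂ + 1))
      = 2 * X * rescale (2 * w) (exp ℂ) := by
  rw [exp_sub_one_mul_exp_add_one, ← map_mul, egf_bernoulliPoly_mul_exp_sub_one, map_mul,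
    rescale_X, rescale_rescale, map_ofNat C 2, mul_comm w 2]

theorem egf_bernoulliPoly_mul_egf_eulerPoly_mul (u v : ℂ) :
    egf (bernoulliPoly · u) * egf (eulerPoly · v) * ((exp ℂ - 1) * (exp ℂ + 1))
      = 2 * X * rescale (u + v) (exp ℂ) := by
  rw [mul_mul_mul_comm, egf_bernoulliPoly_mul_exp_sub_one, egf_eulerPoly_mul_exp_add_one,
    ← exp_mul_exp_eq_exp_add]
  ring

theorem rescale_two_egf_bernoulliPoly_mul_rescale_exp (u c : ℂ) :
    rescale 2 (egf (bernoulliPoly · u)) * rescale c (exp ℂ)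
      = egf (bernoulliPoly · (2 * u)) * egf (eulerPoly · c) := by
  refine mul_right_cancel₀ (mul_ne_zero (exp_sub_one_ne_zero ℂ) (exp_add_one_ne_zero ℂ)) ?_
  rw [egf_bernoulliPoly_mul_egf_eulerPoly_mul, mul_right_comm, rescale_two_egf_bernoulliPoly_mul,
    mul_assoc, exp_mul_exp_eq_exp_add]

theorem egf_bernoulliPoly_mul_egf_eulerPoly_swap (u v : ℂ) :
    egf (bernoulliPoly · u) * egf (eulerPoly · v)
      = egf (bernoulliPoly · v) * egf (eulerPoly · u) :=
  mul_right_cancel₀ (mul_ne_zero (exp_sub_one_ne_zero ℂ) (exp_add_one_ne_zero ℂ)) (by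
    rw [egf_bernoulliPoly_mul_egf_eulerPoly_mul, egf_bernoulliPoly_mul_egf_eulerPoly_mul, add_comm])

theorem stmt2 (n : ℕ) (z : ℂ) :
    ((2 : ℂ) ^ n * bernoulliPoly n (z + 1 / 4)
      = ∑ k ∈ range (n + 1), (2 : ℂ) ^ (2 * (k : ℤ) - n) * (n.choose k : ℂ) *
        bernoulliPoly k z) ∧
    (∑ k ∈ range (n + 1), (2 : ℂ) ^ (2 * (k : ℤ) - n) * (n.choose k : ℂ) *
        bernoulliPoly k z
      = ∑ k ∈ range (n + 1), (n.choose k : ℂ) * eulerPoly (n - k) (1 / 2) *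
        bernoulliPoly k (2 * z)) ∧
    (∑ k ∈ range (n + 1), (n.choose k : ℂ) * eulerPoly (n - k) (1 / 2) *
        bernoulliPoly k (2 * z)
      = ∑ k ∈ range (n + 1), (n.choose k : ℂ) * bernoulliPoly (n - k) (1 / 2) *
        eulerPoly k (2 * z)) := by
  have h₁ : rescale 2 (egf (bernoulliPoly · (z + 1 / 4)))
      = rescale 2 (egf (bernoulliPoly · z)) * rescale (1 / 2) (exp ℂ) := by
    rw [egf_bernoulliPoly_add, map_mul, rescale_rescale]
    norm_num
  have h₂ := rescale_two_egf_bernoulliPoly_mul_rescale_exp z (1 / 2)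
  have h₃ := egf_bernoulliPoly_mul_egf_eulerPoly_swap (2 * z) (1 / 2)
  rw [mul_comm (egf (bernoulliPoly · (1 / 2)))] at h₃
  simp only [rescale_egf, rescale_exp_eq_egf, egf_mul_egf, egf_injective.eq_iff] at h₁ h₂ h₃
  have hpow (k : ℕ) (hk : k ∈ range (n + 1)) :
      (2 : ℂ) ^ (2 * (k : ℤ) - n) * (n.choose k : ℂ) * bernoulliPoly k z
        = (n.choose k : ℂ) * (2 ^ k * bernoulliPoly k z) * (1 / 2) ^ (n - k) := by
    obtain ⟨m, rfl⟩ := Nat.exists_eq_add_of_le (Nat.lt_succ_iff.mp (mem_range.mp hk))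
    rw [show 2 * (k : ℤ) - (k + m : ℕ) = k - m by push_cast; ring, zpow_sub₀ two_ne_zero,
      zpow_natCast, zpow_natCast, Nat.add_sub_cancel_left, one_div, inv_pow]
    ring
  rw [sum_congr rfl hpow]
  refine ⟨congrFun h₁ n, ?_, ?_⟩
  · exact (congrFun h₂ n).trans (sum_congr rfl fun k _ => by ring)
  · exact (sum_congr rfl fun k _ => by ring).trans
      ((congrFun h₃ n).trans (sum_congr rfl fun k _ => by ring))
end

section
/- For every nonnegative integer n and every complex number z, B_n(z) + 2·∑_{k=1}^{⌊n/2⌋} C(n,2k) · B_{n-2k}(z)/3^{2k+1} = (1/3^n)·∑_{k=0}^{n} (-1)^{n-k} · C(n,k) · B_k(3z) = (1/3^n) · B_n(3z - 1), where C(n,k) denotes the binomial coefficient. -/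
open Finset

/-! The right-hand equality is the addition theorem
`B_n(x + y) = ∑ C(n,k) B_k(x) y^(n-k)` at `y = -1`. For the left-hand one, Raabe's
multiplication theorem `B_n(3x) = 3^(n-1) (B_n(x) + B_n(x + 1/3) + B_n(x + 2/3))` at
`x = z - 1/3` expresses `B_n(3z - 1)` through `B_n(z)` and `B_n(z ± 1/3)`, and in
`B_n(z + 1/3) + B_n(z - 1/3)` the addition theorem leaves only the even powers of `1/3`. -/

open Polynomial

theorem sum_range_succ_eq_sum_range_two_mul {M : Type*} [AddCommMonoid M] (f : ℕ → M) (n : ℕ)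
    (hf : ∀ i ≤ n, Odd i → f i = 0) :
    ∑ i ∈ range (n + 1), f i = ∑ j ∈ range (n / 2 + 1), f (2 * j) := by
  have hinj : Set.InjOn (2 * ·) (range (n / 2 + 1) : Set ℕ) := fun a _ b _ h => by simpa using h
  rw [← sum_image hinj]
  refine (sum_subset (fun i hi => ?_) fun i hi hni => hf i ?_ ?_).symm
  · obtain ⟨j, hj, rfl⟩ := mem_image.mp hi
    simp only [mem_range] at hj ⊢
    omega
  · simpa [Nat.lt_succ_iff] using hi
  · rw [← Nat.not_even_iff_odd]
    rintro ⟨j, rfl⟩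
    simp only [mem_range, mem_image, not_exists, not_and] at hi hni
    exact hni j (by omega) (by omega)

theorem Polynomial.eq_C_eval_zero_of_eval_add_eq {R : Type*} [CommRing R] [IsDomain R]
    [CharZero R] {p : R[X]} {c : R} (hc : c ≠ 0) (h : ∀ x, p.eval (x + c) = p.eval x) :
    p = C (p.eval 0) := by
  have hk : ∀ k : ℕ, p.eval (k * c) = p.eval 0 := by
    intro k
    induction k with
    | zero => simp
    | succ k ih => rw [Nat.cast_succ, add_one_mul, h, ih]
  refine eq_of_infinite_eval_eq _ _ (Set.infinite_of_injective_forall_mem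
    (f := fun k : ℕ => (k : R) * c)
    (fun a b hab => by exact_mod_cast mul_right_cancel₀ hc hab) fun k => ?_)
  simpa using hk k

theorem Polynomial.bernoulli_comp_natCast_mul_X (m n : ℕ) :
    C (m : ℚ) * (bernoulli n).comp (C (m : ℚ) * X) =
      C ((m : ℚ) ^ n) * ∑ j ∈ range m, (bernoulli n).comp (X + C ((j : ℚ) / m)) := by
  rcases Nat.eq_zero_or_pos m with rfl | hm
  · simp
  have hm' : (m : ℚ) ≠ 0 := by positivity
  -- `T` is `1/m`-periodic because `B_{n+1}(x + 1) - B_{n+1}(x) = (n + 1) x^n`, hence constant;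
  -- its derivative is `n + 1` times the difference of the two sides.
  set T := (bernoulli (n + 1)).comp (C (m : ℚ) * X) -
    C ((m : ℚ) ^ n) * ∑ j ∈ range m, (bernoulli (n + 1)).comp (X + C ((j : ℚ) / m)) with hT
  have hperiodic : ∀ x : ℚ, T.eval (x + 1 / m) = T.eval x := by
    intro x
    have hshift : ∀ j : ℕ, x + 1 / m + j / m = x + ((j + 1 : ℕ) : ℚ) / m := fun j => by
      push_cast; ring
    simp only [hT, eval_sub, eval_mul, eval_C, eval_comp, eval_X, eval_add, eval_finsetSum,
      hshift]
    set f : ℕ → ℚ := fun j => (bernoulli (n + 1)).eval (x + j / m)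
    have htelescope := sum_range_succ' f m
    rw [sum_range_succ] at htelescope
    have hfm : f m = (bernoulli (n + 1)).eval x + (n + 1) * x ^ n := by
      simp only [f, div_self hm', add_comm x, bernoulli_eval_one_add]
      push_cast
      ring_nf
    have hf0 : f 0 = (bernoulli (n + 1)).eval x := by simp [f]
    rw [show (m : ℚ) * (x + 1 / m) = 1 + m * x by field_simp; ring, bernoulli_eval_one_add,
      Nat.add_sub_cancel, Nat.cast_succ]
    linear_combination (m : ℚ) ^ n * htelescope - (m : ℚ) ^ n * hfm + (m : ℚ) ^ n * hf0
  have hconst := eq_C_eval_zero_of_eval_add_eq (one_div_ne_zero hm') hperiodic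
  have hderiv : derivative T = ((n : ℚ[X]) + 1) *
      (C (m : ℚ) * (bernoulli n).comp (C (m : ℚ) * X) -
        C ((m : ℚ) ^ n) * ∑ j ∈ range m, (bernoulli n).comp (X + C ((j : ℚ) / m))) := by
    simp only [hT, derivative_sub, derivative_mul, derivative_comp, derivative_bernoulli_add_one,
      derivative_C, derivative_X, derivative_sum, derivative_add, mul_comp, add_comp,
      natCast_comp, one_comp, zero_mul, zero_add, add_zero, mul_one, one_mul, ← mul_sum]
    ring
  rw [hconst, derivative_C, eq_comm, mul_eq_zero, sub_eq_zero] at hderiv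
  exact hderiv.resolve_left (Nat.cast_add_one_ne_zero n)

section Algebra

variable {A : Type*} [CommRing A] [Algebra ℚ A]

theorem aeval_bernoulli (n : ℕ) (x : A) :
    aeval x (bernoulli n) = ∑ i ∈ range (n + 1),
      (n.choose i : A) * algebraMap ℚ A (_root_.bernoulli i) * x ^ (n - i) := by
  simp only [Polynomial.bernoulli, map_sum, aeval_monomial, map_mul, map_natCast]
  exact sum_congr rfl fun i _ => by ring

theorem aeval_bernoulli_add (n : ℕ) (x y : A) :
    aeval (x + y) (bernoulli n) = ∑ k ∈ range (n + 1),
      (n.choose k : A) * aeval x (bernoulli k) * y ^ (n - k) := by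
  let f : ℕ → ℕ → A := fun i j => (n.choose (i + j) * (i + j).choose i : ℕ) *
    algebraMap ℚ A (_root_.bernoulli i) * x ^ j * y ^ (n - (i + j))
  calc aeval (x + y) (bernoulli n)
      = ∑ i ∈ range (n + 1), ∑ j ∈ range (n + 1 - i), f i j := by
        rw [aeval_bernoulli]
        refine sum_congr rfl fun i hi => ?_
        have hin : i ≤ n := Nat.lt_succ_iff.mp (mem_range.mp hi)
        rw [add_pow, mul_sum, Nat.sub_add_comm hin]
        refine sum_congr rfl fun j hj => ?_
        simp only [f, Nat.choose_mul (Nat.le_add_right i j), Nat.add_sub_cancel_left,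
          Nat.sub_add_eq]
        push_cast
        ring
    _ = ∑ k ∈ range (n + 1), ∑ i ∈ range (k + 1), f i (k - i) :=
        (sum_range_diag_flip _ f).symm
    _ = _ := by
        refine sum_congr rfl fun k _ => ?_
        rw [aeval_bernoulli, mul_sum, sum_mul]
        refine sum_congr rfl fun i hi => ?_
        have hik : i ≤ k := Nat.lt_succ_iff.mp (mem_range.mp hi)
        simp only [f, Nat.add_sub_cancel' hik]
        push_cast
        ring

theorem aeval_bernoulli_add_add_aeval_bernoulli_sub (n : ℕ) (x y : A) :
    aeval (x + y) (bernoulli n) + aeval (x - y) (bernoulli n) =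
      2 * ∑ j ∈ range (n / 2 + 1),
        (n.choose (2 * j) : A) * aeval x (bernoulli (n - 2 * j)) * y ^ (2 * j) := by
  rw [sub_eq_add_neg, aeval_bernoulli_add, aeval_bernoulli_add, ← sum_add_distrib,
    ← sum_range_reflect, Nat.add_sub_cancel, sum_range_succ_eq_sum_range_two_mul, mul_sum]
  · refine sum_congr rfl fun j hj => ?_
    have h2j : 2 * j ≤ n := by simp only [mem_range] at hj; omega
    rw [Nat.sub_sub_self h2j, ← Nat.choose_symm h2j, (even_two_mul j).neg_pow]
    ring
  · intro i hi hodd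
    rw [Nat.sub_sub_self hi, hodd.neg_pow]
    ring

theorem aeval_bernoulli_natCast_mul (m n : ℕ) (x : A) :
    (m : A) * aeval (m * x) (bernoulli n) =
      m ^ n * ∑ j ∈ range m, aeval (x + algebraMap ℚ A (j / m)) (bernoulli n) := by
  simpa [aeval_comp] using congr(aeval x $(bernoulli_comp_natCast_mul_X m n))

end Algebra

theorem bernoulliPoly_three_mul_sub_one (n : ℕ) (z : ℂ) :
    3 * bernoulliPoly n (3 * z - 1) =
      3 ^ n * (bernoulliPoly n (z - 1 / 3) + bernoulliPoly n z + bernoulliPoly n (z + 1 / 3)) := by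
  have h := aeval_bernoulli_natCast_mul 3 n (z - 1 / 3)
  simp only [sum_range_succ, range_zero, sum_empty, map_div₀, map_natCast, map_ofNat,
    Nat.cast_ofNat, Nat.cast_zero, Nat.cast_one, zero_div, add_zero, zero_add] at h
  rwa [show (3 : ℂ) * (z - 1 / 3) = 3 * z - 1 by ring, show z - 1 / 3 + 1 / 3 = z by ring,
    show z - 1 / 3 + 2 / 3 = z + 1 / 3 by ring] at h

theorem stmt3 (n : ℕ) (z : ℂ) :
    (bernoulliPoly n z + 2 * ∑ k ∈ Icc 1 (n / 2), (n.choose (2 * k) : ℂ) *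
        bernoulliPoly (n - 2 * k) z / 3 ^ (2 * k + 1)
      = (1 / 3 ^ n : ℂ) * ∑ k ∈ range (n + 1), (-1 : ℂ) ^ (n - k) *
        (n.choose k : ℂ) * bernoulliPoly k (3 * z)) ∧
    ((1 / 3 ^ n : ℂ) * ∑ k ∈ range (n + 1), (-1 : ℂ) ^ (n - k) *
        (n.choose k : ℂ) * bernoulliPoly k (3 * z)
      = (1 / 3 ^ n : ℂ) * bernoulliPoly n (3 * z - 1)) := by
  have hneg_one : ∑ k ∈ range (n + 1), (-1 : ℂ) ^ (n - k) * (n.choose k : ℂ) *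
      bernoulliPoly k (3 * z) = bernoulliPoly n (3 * z - 1) := by
    rw [bernoulliPoly, sub_eq_add_neg, aeval_bernoulli_add]
    exact sum_congr rfl fun k _ => by rw [bernoulliPoly]; ring
  refine ⟨?_, by rw [hneg_one]⟩
  have hmul := bernoulliPoly_three_mul_sub_one n z
  have hsym := aeval_bernoulli_add_add_aeval_bernoulli_sub n z (1 / 3)
  rw [sum_range_eq_add_Ico _ (show 0 < n / 2 + 1 by omega), Ico_add_one_right_eq_Icc] at hsym
  simp only [mul_zero, Nat.choose_zero_right, Nat.sub_zero, pow_zero, Nat.cast_one, one_mul,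
    mul_one] at hsym
  have hscale : ∑ k ∈ Icc 1 (n / 2), (n.choose (2 * k) : ℂ) *
      bernoulliPoly (n - 2 * k) z / 3 ^ (2 * k + 1) = 1 / 3 * ∑ k ∈ Icc 1 (n / 2),
        (n.choose (2 * k) : ℂ) * bernoulliPoly (n - 2 * k) z * (1 / 3) ^ (2 * k) := by
    rw [mul_sum]
    exact sum_congr rfl fun k _ => by rw [pow_succ, one_div_pow]; field_simp
  rw [hneg_one, hscale]
  simp only [bernoulliPoly] at hmul ⊢
  field_simp
  linear_combination -hmul - 3 ^ n * hsym
end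

section
/- For every nonnegative integer n and every complex number z, ∑_{k=0}^{n} (4^{2k}/(2(n-k)+1)) · C(2n,2k) · B_{2k}(z) = ∑_{k=0}^{n} 2^{2k} · C(2n,2k) · E_{2k}(2z) − ∑_{k=0}^{n-1} 2^{2k+1} · C(2n,2k+1) · E_{2k+1}(2z), where C(n,k) denotes the binomial coefficient. -/
/-!
The Bernoulli polynomials form an Appell sequence, so `∑ C(N,m) t^m B_m(z) = t^N B_N(z + 1/t)`;
averaging `t = 4` and `t = -4` extracts the even terms, and the left side becomes
`2·4^{2n}/(2n+1) · (B_{2n+1}(z + 1/4) - B_{2n+1}(z - 1/4))`.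
The right side is `∑_m (-2)^m C(2n,m) E_m(2z)`. As functions of `x`, both
`∑_m (-2)^m C(N,m) E_m(x)` and `2(-4)^N/(N+1) · (B_{N+1}(x/2 + 1/4) - B_{N+1}(x/2 - 1/4))`
satisfy `f(x+1) + f(x) = 2(1 - 2x)^N`, by `E_m(x+1) + E_m(x) = 2x^m` and
`B_k(u+1) - B_k(u) = k u^{k-1}`. Their difference is antiperiodic and killed by a power of the
forward difference `Δ`; since `Δ f = -2 f` for antiperiodic `f`, it vanishes.
-/

open Finset

open Polynomial fwdDiff

section Appell

variable {R : Type*} [CommSemiring R]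

def appell (a : ℕ → R) (N : ℕ) (x : R) : R :=
  ∑ i ∈ range (N + 1), N.choose i * a i * x ^ (N - i)

theorem appell_add (a : ℕ → R) (N : ℕ) (x y : R) :
    appell a N (x + y) = ∑ m ∈ range (N + 1), N.choose m * appell a m x * y ^ (N - m) := by
  simp only [appell, mul_sum, sum_mul, range_eq_Ico]
  rw [← sum_Ico_Ico_comm]
  refine sum_congr rfl fun i hi => ?_
  rw [sum_Ico_eq_sum_range, add_pow, mul_sum]
  have hiN : i ≤ N := by simp only [mem_Ico] at hi; omega
  refine sum_congr (by congr 1; omega) fun j hj => ?_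
  have hchoose : (N.choose (i + j) * (i + j).choose i : R) = N.choose i * (N - i).choose j := by
    have := Nat.choose_mul (n := N) (Nat.le_add_right i j)
    rw [add_tsub_cancel_left] at this
    simpa using congrArg (Nat.cast : ℕ → R) this
  rw [show N - i - j = N - (i + j) by omega, show i + j - i = j by omega]
  calc _ = (N.choose i * (N - i).choose j : R) * (a i * x ^ j * y ^ (N - (i + j))) := by ring
    _ = _ := by rw [← hchoose]; ring

end Appell

theorem bernoulliPoly_eq_appell (N : ℕ) (z : ℂ) :
    bernoulliPoly N z = appell (fun i => (bernoulli i : ℂ)) N z := by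
  simp only [bernoulliPoly, Polynomial.bernoulli, map_sum, aeval_monomial, appell]
  refine sum_congr rfl fun i _ => ?_
  simp only [map_mul, map_natCast, eq_ratCast]
  ring

theorem bernoulliPoly_add (N : ℕ) (x y : ℂ) :
    bernoulliPoly N (x + y)
      = ∑ m ∈ range (N + 1), N.choose m * bernoulliPoly m x * y ^ (N - m) := by
  simp only [bernoulliPoly_eq_appell, appell_add]

theorem bernoulliPoly_add_one (N : ℕ) (z : ℂ) :
    bernoulliPoly N (z + 1) = bernoulliPoly N z + N * z ^ (N - 1) := by
  have := congrArg (aeval z) (bernoulli_comp_one_add_X N)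
  simpa [bernoulliPoly, aeval_comp, add_comm] using this

theorem sum_choose_mul_pow_mul_bernoulliPoly (N : ℕ) {t : ℂ} (ht : t ≠ 0) (z : ℂ) :
    ∑ m ∈ range (N + 1), N.choose m * t ^ m * bernoulliPoly m z
      = t ^ N * bernoulliPoly N (z + t⁻¹) := by
  rw [bernoulliPoly_add, mul_sum]
  refine sum_congr rfl fun m hm => ?_
  rw [← Nat.add_sub_of_le (Nat.lt_succ_iff.mp (mem_range.mp hm)), pow_add, inv_pow,
    Nat.add_sub_cancel_left]
  field_simp

theorem sum_range_two_mul_add_one {M : Type*} [AddCommMonoid M] (f : ℕ → M) (n : ℕ) :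
    ∑ m ∈ range (2 * n + 1), f m
      = ∑ k ∈ range (n + 1), f (2 * k) + ∑ k ∈ range n, f (2 * k + 1) := by
  induction n with
  | zero => simp
  | succ n ih =>
    rw [show 2 * (n + 1) + 1 = 2 * n + 1 + 1 + 1 by ring, sum_range_succ, sum_range_succ, ih,
      sum_range_succ (fun k => f (2 * k)) (n + 1), sum_range_succ (fun k => f (2 * k + 1)) n,
      show 2 * (n + 1) = 2 * n + 1 + 1 by ring]
    abel

theorem sum_choose_mul_four_pow_mul_bernoulliPoly_even (n : ℕ) (z : ℂ) :
    ∑ k ∈ range (n + 1),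
        ((2 * n + 1).choose (2 * k) : ℂ) * 4 ^ (2 * k) * bernoulliPoly (2 * k) z
      = 4 ^ (2 * n + 1) / 2 * (bernoulliPoly (2 * n + 1) (z + 1 / 4)
          - bernoulliPoly (2 * n + 1) (z - 1 / 4)) := by
  have hplus := sum_choose_mul_pow_mul_bernoulliPoly (2 * n + 1) (by norm_num : (4 : ℂ) ≠ 0) z
  have hminus := sum_choose_mul_pow_mul_bernoulliPoly (2 * n + 1) (by norm_num : (-4 : ℂ) ≠ 0) z
  rw [sum_range_succ, sum_range_two_mul_add_one] at hplus hminus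
  simp only [(even_two_mul _).neg_pow, (odd_two_mul_add_one _).neg_pow, neg_mul, mul_neg,
    sum_neg_distrib, inv_neg, ← sub_eq_add_neg, one_div] at hminus ⊢
  linear_combination (hplus + hminus) / 2

theorem sum_choose_div_mul_bernoulliPoly_even (n : ℕ) (z : ℂ) :
    ∑ k ∈ range (n + 1), (4 : ℂ) ^ (2 * k) / (2 * (n - k : ℕ) + 1) *
        ((2 * n).choose (2 * k) : ℂ) * bernoulliPoly (2 * k) z
      = 2 * 4 ^ (2 * n) / (2 * n + 1) * (bernoulliPoly (2 * n + 1) (z + 1 / 4)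
          - bernoulliPoly (2 * n + 1) (z - 1 / 4)) := by
  rw [show (2 * 4 ^ (2 * n) : ℂ) = 4 ^ (2 * n + 1) / 2 by ring, div_mul_eq_mul_div,
    ← sum_choose_mul_four_pow_mul_bernoulliPoly_even, sum_div]
  refine sum_congr rfl fun k hk => ?_
  have hk : k ≤ n := Nat.lt_succ_iff.mp (mem_range.mp hk)
  have hchoose : ((2 * n).choose (2 * k) * (2 * n + 1) : ℂ)
      = (2 * n + 1).choose (2 * k) * (2 * (n - k : ℕ) + 1) := by
    have h := Nat.choose_mul_succ_eq (2 * n) (2 * k)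
    rw [show 2 * n + 1 - 2 * k = 2 * (n - k) + 1 by omega] at h
    exact_mod_cast h
  have hd : (2 * (n - k : ℕ) + 1 : ℂ) ≠ 0 := by exact_mod_cast (2 * (n - k)).succ_ne_zero
  have hN : (2 * n + 1 : ℂ) ≠ 0 := by exact_mod_cast (2 * n).succ_ne_zero
  field_simp
  linear_combination bernoulliPoly (2 * k) z * hchoose

section FwdDiff

variable {M G : Type*} [AddCommMonoid M] [AddCommGroup G]

theorem fwdDiff_iter_sub (h : M) (f g : M → G) (n : ℕ) :
    Δ_[h] ^[n] (f - g) = Δ_[h] ^[n] f - Δ_[h] ^[n] g := by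
  simpa only [fwdDiff_aux.coe_fwdDiffₗ_pow] using map_sub (fwdDiff_aux.fwdDiffₗ M G h ^ n) f g

theorem fwdDiff_iter_apply_add (h : M) (f : M → G) (n : ℕ) (x : M) :
    Δ_[h] ^[n] f (x + h) = Δ_[h] ^[n] f x + Δ_[h] ^[n + 1] f x := by
  rw [Function.iterate_succ_apply', fwdDiff, add_sub_cancel]

theorem eq_zero_of_antiperiodic_of_fwdDiff_iter_eq_zero [IsAddTorsionFree G] {h : M} {f : M → G}
    {d : ℕ} (hf : Function.Antiperiodic f h) (hd : Δ_[h] ^[d] f = 0) : f = 0 := by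
  have hΔ : Δ_[h] f = (-2 : ℤ) • f := funext fun x => by
    simp only [fwdDiff, hf x, Pi.smul_apply]
    abel
  have hiter : ∀ n, Δ_[h] ^[n] f = (-2 : ℤ) ^ n • f := by
    intro n
    induction n with
    | zero => simp
    | succ n ih =>
      rw [Function.iterate_succ_apply, hΔ, fwdDiff_iter_const_smul, ih, smul_smul, pow_succ']
  funext x
  have := congrFun (hiter d) x
  rw [hd] at this
  exact (IsAddTorsionFree.zsmul_eq_zero_iff_right (pow_ne_zero d (by norm_num))).mp this.symm

theorem eq_of_add_add_eq_of_fwdDiff_iter_eq_zero [IsAddTorsionFree G] {h : M} {f g : M → G}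
    {a b : ℕ} (hfg : ∀ x, f (x + h) + f x = g (x + h) + g x) (hf : Δ_[h] ^[a] f = 0)
    (hg : Δ_[h] ^[b] g = 0) : f = g := by
  have hzero : ∀ k, Δ_[h] ^[k] (0 : M → G) = 0 := fun k =>
    Function.iterate_fixed (fwdDiff_const h 0) k
  rw [← sub_eq_zero]
  refine eq_zero_of_antiperiodic_of_fwdDiff_iter_eq_zero (h := h) (d := b + a) (fun x => ?_) ?_
  · rw [Pi.sub_apply, Pi.sub_apply, neg_sub, sub_eq_sub_iff_add_eq_add, hfg x, add_comm]
  · rw [fwdDiff_iter_sub, Function.iterate_add_apply (x := f), hf, hzero, add_comm,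
      Function.iterate_add_apply, hg, hzero, sub_zero]

end FwdDiff

theorem eulerPoly_eq_sum_fwdDiff_iter (n : ℕ) :
    eulerPoly n
      = ∑ k ∈ range (n + 1), (-2⁻¹ : ℂ) ^ k • Δ_[1] ^[k] (fun x : ℂ => x ^ n) := by
  funext z
  simp only [eulerPoly, Finset.sum_apply, Pi.smul_apply, fwdDiff_iter_eq_sum_shift, smul_eq_mul,
    mul_sum]
  refine sum_congr rfl fun k _ => sum_congr rfl fun j hj => ?_
  obtain ⟨i, rfl⟩ := Nat.exists_eq_add_of_le (Nat.lt_succ_iff.mp (mem_range.mp hj))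
  have hsq : ((-1 : ℂ) ^ i) ^ 2 = 1 := by rw [← pow_mul, pow_mul', neg_one_sq, one_pow]
  simp only [zsmul_eq_mul, nsmul_eq_mul, Nat.add_sub_cancel_left, neg_pow (2⁻¹ : ℂ), one_div,
    inv_pow, Int.cast_mul, Int.cast_pow, Int.cast_neg, Int.cast_one, Int.cast_natCast]
  linear_combination (-(2 ^ (j + i) : ℂ)⁻¹ * (-1) ^ j * ((j + i).choose j) * (z + j) ^ n) * hsq

theorem fwdDiff_iter_eulerPoly_eq_zero {n d : ℕ} (h : n < d) : Δ_[1] ^[d] (eulerPoly n) = 0 := by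
  rw [eulerPoly_eq_sum_fwdDiff_iter, fwdDiff_iter_finsetSum]
  refine sum_eq_zero fun k _ => ?_
  rw [fwdDiff_iter_const_smul, ← Function.iterate_add_apply,
    fwdDiff_iter_pow_eq_zero_of_lt (by omega), smul_zero]

theorem eulerPoly_add_one_add (n : ℕ) (x : ℂ) :
    eulerPoly n (x + 1) + eulerPoly n x = 2 * x ^ n := by
  set d : ℕ → ℂ := fun k => Δ_[1] ^[k] (fun x : ℂ => x ^ n) x
  have htel : ∀ k, (-2⁻¹ : ℂ) ^ k * (d k + d (k + 1)) + (-2⁻¹) ^ k * d k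
      = 2 * (-2⁻¹) ^ k * d k - 2 * (-2⁻¹) ^ (k + 1) * d (k + 1) := fun k => by ring
  simp only [eulerPoly_eq_sum_fwdDiff_iter, Finset.sum_apply, Pi.smul_apply, smul_eq_mul,
    fwdDiff_iter_apply_add, ← sum_add_distrib]
  rw [sum_congr rfl fun k _ => htel k, sum_range_sub' (fun k => 2 * (-2⁻¹ : ℂ) ^ k * d k)]
  simp [d, fwdDiff_iter_pow_eq_zero_of_lt (Nat.lt_succ_self n)]

theorem sum_neg_two_pow_mul_choose_mul_eulerPoly (N : ℕ) (x : ℂ) :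
    ∑ m ∈ range (N + 1), (-2 : ℂ) ^ m * N.choose m * eulerPoly m x
      = 2 * (-4) ^ N / (N + 1) * (bernoulliPoly (N + 1) (x / 2 + 1 / 4)
          - bernoulliPoly (N + 1) (x / 2 - 1 / 4)) := by
  set c : ℂ := 2 * (-4) ^ N / (N + 1)
  set P : ℂ[X] := (Polynomial.bernoulli (N + 1)).map (algebraMap ℚ ℂ)
  set q : ℂ[X] := C c * (P.comp (C 2⁻¹ * X + C 4⁻¹) - P.comp (C 2⁻¹ * X - C 4⁻¹))
  set E : ℂ → ℂ := ∑ m ∈ range (N + 1), ((-2 : ℂ) ^ m * N.choose m) • eulerPoly m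
  have hE : ∀ x, E x = ∑ m ∈ range (N + 1), (-2 : ℂ) ^ m * N.choose m * eulerPoly m x := by
    simp [E, Finset.sum_apply]
  have hq : ∀ x, q.eval x = c * (bernoulliPoly (N + 1) (x / 2 + 1 / 4)
      - bernoulliPoly (N + 1) (x / 2 - 1 / 4)) := fun x => by
    simp only [q, P, eval_mul, eval_C, eval_sub, eval_comp, eval_add, eval_X, eval_map_algebraMap,
      bernoulliPoly, div_eq_inv_mul, mul_one]
  suffices E = q.eval by simpa [hE, hq] using congrFun this x
  have hE_add : ∀ x, E (x + 1) + E x = 2 * (1 - 2 * x) ^ N := fun x => by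
    simp only [hE, ← sum_add_distrib, ← mul_add, eulerPoly_add_one_add]
    rw [show 1 - 2 * x = -2 * x + 1 by ring, add_pow, mul_sum]
    exact sum_congr rfl fun m _ => by rw [one_pow, mul_pow]; ring
  have hq_add : ∀ x, q.eval (x + 1) + q.eval x = 2 * (1 - 2 * x) ^ N := fun x => by
    have h := bernoulliPoly_add_one (N + 1) (x / 2 - 1 / 4)
    rw [hq, hq, show (x + 1) / 2 + 1 / 4 = x / 2 - 1 / 4 + 1 by ring,
      show (x + 1) / 2 - 1 / 4 = x / 2 + 1 / 4 by ring, h]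
    have hN : (N + 1 : ℂ) ≠ 0 := by exact_mod_cast N.succ_ne_zero
    simp only [c, Nat.add_sub_cancel]
    field_simp
    rw [show (1 - 2 * x) = -4 * (x / 2 - 1 / 4) by ring, mul_pow]
    push_cast
    ring
  have hE_fwd : Δ_[1] ^[N + 1] E = 0 := by
    simp only [E, fwdDiff_iter_finsetSum, fwdDiff_iter_const_smul]
    exact sum_eq_zero fun m hm => by
      rw [fwdDiff_iter_eulerPoly_eq_zero (mem_range.mp hm), smul_zero]
  exact eq_of_add_add_eq_of_fwdDiff_iter_eq_zero (fun x => by rw [hE_add, hq_add]) hE_fwd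
    q.fwdDiff_iter_degree_add_one_eq_zero

theorem stmt8 (n : ℕ) (z : ℂ) :
    ∑ k ∈ range (n + 1), (4 : ℂ) ^ (2 * k) / (2 * (n - k : ℕ) + 1) *
        ((2 * n).choose (2 * k) : ℂ) * bernoulliPoly (2 * k) z
      = ∑ k ∈ range (n + 1), (2 : ℂ) ^ (2 * k) * ((2 * n).choose (2 * k) : ℂ) *
          eulerPoly (2 * k) (2 * z)
        - ∑ k ∈ range n, (2 : ℂ) ^ (2 * k + 1) * ((2 * n).choose (2 * k + 1) : ℂ) *
          eulerPoly (2 * k + 1) (2 * z) := by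
  have heuler := sum_neg_two_pow_mul_choose_mul_eulerPoly (2 * n) (2 * z)
  rw [sum_range_two_mul_add_one] at heuler
  simp only [(even_two_mul _).neg_pow, (odd_two_mul_add_one _).neg_pow, neg_mul,
    sum_neg_distrib, ← sub_eq_add_neg, mul_div_cancel_left₀ z two_ne_zero, Nat.cast_mul,
    Nat.cast_ofNat] at heuler
  rw [sum_choose_div_mul_bernoulliPoly_even, heuler]
end
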